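/- div maps V(T) onto P_1 ⊕ span{b_T^NC}: for every v ∈ V(T) there exist a polynomial p of total degree ≤ 1 and c ∈ ℝ with div v = p + c·b_T^NC; conversely, for every polynomial p of total degree ≤ 1 and every c ∈ ℝ there exists v ∈ V(T) with div v = p + c·b_T^NC. -/

import Mathlib

/-!
`div` is linear on differentiable fields, so the first half only has to be checked on the
generators of `V(T)`. A polynomial field of degree `≤ 2` has a divergence of degree `≤ 1`.
The fields `skw(a ⊗ t) ∇ψ` are divergence free: their divergence is
`½ (D²ψ(a, t) - D²ψ(t, a)) = 0` by symmetry of the Hessian. Since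
`∑_{i ≥ 1} λᵢ(x) (vᵢ - v₀) = x - v₀`, the field `w_T` is `φ(x) (x - v₀)` with
`φ = (b_T^NC - 2λ₀ + 2/d)/(d+2)`, so `div w_T = Dφ(x)(x - v₀) + d φ(x)`; with
`Dλᵢ(x)(x - v₀) = λᵢ(x) - δᵢ₀` this is exactly `b_T^NC`.
Conversely, `p = ∂₁Q` for a quadratic `Q`, and `(Q, 0, …, 0) + c w_T` has divergence
`p + c b_T^NC`.
-/

open Matrix Finset
open scoped RealInnerProductSpace

noncomputable section

/-- Evaluation of a multivariate polynomial at a point of `ℝ^d`. -/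
noncomputable def pval {d : ℕ} (p : MvPolynomial (Fin d) ℝ) (x : EuclideanSpace ℝ (Fin d)) : ℝ :=
  MvPolynomial.eval (fun i => x i) p

/-- Divergence of a vector field on `ℝ^d`: the sum of the diagonal entries of its Jacobian. -/
noncomputable def divg {d : ℕ} (w : EuclideanSpace ℝ (Fin d) → EuclideanSpace ℝ (Fin d))
    (x : EuclideanSpace ℝ (Fin d)) : ℝ :=
  ∑ i, fderiv ℝ w x (EuclideanSpace.single i 1) i

/-- The nonconforming bubble function `b_T^NC = 2 - (d+1) ∑ᵢ λᵢ²`. -/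
noncomputable def bNC {d : ℕ} (L : Fin (d + 1) → (EuclideanSpace ℝ (Fin d) →ᵃ[ℝ] ℝ))
    (x : EuclideanSpace ℝ (Fin d)) : ℝ :=
  2 - ((d : ℝ) + 1) * ∑ i, (L i x) ^ 2

/-- The element bubble `b_T = λ₀ λ₁ ⋯ λ_d`. -/
noncomputable def bT {d : ℕ} (L : Fin (d + 1) → (EuclideanSpace ℝ (Fin d) →ᵃ[ℝ] ℝ))
    (x : EuclideanSpace ℝ (Fin d)) : ℝ :=
  ∏ i, L i x

/-- The facet bubble `b_{F_i} = ∏_{j ≠ i} λⱼ`. -/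
noncomputable def bF {d : ℕ} (L : Fin (d + 1) → (EuclideanSpace ℝ (Fin d) →ᵃ[ℝ] ℝ))
    (i : Fin (d + 1)) (x : EuclideanSpace ℝ (Fin d)) : ℝ :=
  ∏ j ∈ Finset.univ.erase i, L j x

/-- The outward unit normal `nᵢ = -∇λᵢ/|∇λᵢ|` of the facet `F_i`, in terms of the gradient
vectors `g i` of the barycentric coordinates. -/
noncomputable def nrm {d : ℕ} (g : Fin (d + 1) → EuclideanSpace ℝ (Fin d)) (i : Fin (d + 1)) :
    EuclideanSpace ℝ (Fin d) :=
  -(‖g i‖⁻¹ • g i)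

/-- The special field `w_T(x) = (1/(d+2))(b_T^NC(x) - 2λ₀(x) + 2/d) ∑_{i=1}^d λᵢ(x)(vᵢ - v₀)`. -/
noncomputable def wT {d : ℕ} (v : Fin (d + 1) → EuclideanSpace ℝ (Fin d))
    (L : Fin (d + 1) → (EuclideanSpace ℝ (Fin d) →ᵃ[ℝ] ℝ)) :
    EuclideanSpace ℝ (Fin d) → EuclideanSpace ℝ (Fin d) := fun x =>
  ((1 : ℝ) / ((d : ℝ) + 2)) • ((bNC L x - 2 * L 0 x + 2 / (d : ℝ)) •
    ∑ i ∈ Finset.univ.erase (0 : Fin (d + 1)), L i x • (v i - v 0))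

/-- Application of the matrix `skw(a ⊗ b) = (a bᵀ - b aᵀ)/2` to the vector `z`. -/
noncomputable def skwApply {d : ℕ} (a b z : EuclideanSpace ℝ (Fin d)) :
    EuclideanSpace ℝ (Fin d) :=
  ((1 : ℝ) / 2) • (⟪b, z⟫ • a - ⟪a, z⟫ • b)

/-- The generating set of the shape function space `V(T)`:
(i) all vector fields with polynomial components of total degree ≤ 2; (ii) `w_T`;
(iii) the fields `skw(nᵢ ⊗ t) ∇(b_T b_{F_i} ℓ)` with `t ⟂ nᵢ` and `ℓ ∈ span{λⱼ : j ≠ i}`;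
(iv) the fields `skw(nᵢ ⊗ t) ∇(b_T² b_{F_i})` with `t ⟂ nᵢ`. -/
noncomputable def VTset {d : ℕ} (v : Fin (d + 1) → EuclideanSpace ℝ (Fin d))
    (L : Fin (d + 1) → (EuclideanSpace ℝ (Fin d) →ᵃ[ℝ] ℝ))
    (g : Fin (d + 1) → EuclideanSpace ℝ (Fin d)) :
    Set (EuclideanSpace ℝ (Fin d) → EuclideanSpace ℝ (Fin d)) :=
  {w | ∃ P : Fin d → MvPolynomial (Fin d) ℝ,
      (∀ k, (P k).totalDegree ≤ 2) ∧ ∀ x k, w x k = pval (P k) x}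
  ∪ {wT v L}
  ∪ {w | ∃ i : Fin (d + 1), ∃ t : EuclideanSpace ℝ (Fin d), ⟪t, nrm g i⟫ = 0 ∧
      ∃ c : Fin (d + 1) → ℝ, c i = 0 ∧
      ∀ x, w x = skwApply (nrm g i) t
        (gradient (fun y => bT L y * bF L i y * ∑ j, c j * L j y) x)}
  ∪ {w | ∃ i : Fin (d + 1), ∃ t : EuclideanSpace ℝ (Fin d), ⟪t, nrm g i⟫ = 0 ∧
      ∀ x, w x = skwApply (nrm g i) t
        (gradient (fun y => (bT L y) ^ 2 * bF L i y) x)}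

/-- The shape function space `V(T)`, the span of `VTset`. -/
noncomputable def VT {d : ℕ} (v : Fin (d + 1) → EuclideanSpace ℝ (Fin d))
    (L : Fin (d + 1) → (EuclideanSpace ℝ (Fin d) →ᵃ[ℝ] ℝ))
    (g : Fin (d + 1) → EuclideanSpace ℝ (Fin d)) :
    Submodule ℝ (EuclideanSpace ℝ (Fin d) → EuclideanSpace ℝ (Fin d)) :=
  Submodule.span ℝ (VTset v L g)

theorem MvPolynomial.totalDegree_pderiv_le {σ R : Type*} [CommSemiring R] (i : σ)
    (p : MvPolynomial σ R) : (pderiv i p).totalDegree ≤ p.totalDegree - 1 := by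
  refine Finset.sup_le fun m hm => ?_
  have hmem : m + Finsupp.single i 1 ∈ p.support := by
    rw [mem_support_iff, coeff_pderiv] at hm
    exact mem_support_iff.2 (left_ne_zero_of_mul hm)
  have h := le_totalDegree hmem
  rw [Finsupp.sum_add_index' (fun _ => rfl) (fun _ _ _ => rfl), Finsupp.sum_single_index rfl] at h
  omega

theorem MvPolynomial.exists_totalDegree_le_two_pderiv_eq {σ R : Type*} [Field R] [CharZero R]
    (i : σ) {p : MvPolynomial σ R} (hp : p.totalDegree ≤ 1) :
    ∃ Q : MvPolynomial σ R, Q.totalDegree ≤ 2 ∧ pderiv i Q = p := by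
  obtain ⟨e, he⟩ : ∃ e, pderiv i p = C e :=
    ⟨_, totalDegree_eq_zero_iff_eq_C.1 (by have := totalDegree_pderiv_le i p; omega)⟩
  refine ⟨X i * p - C (e / 2) * X i ^ 2, ?_, ?_⟩
  · refine (totalDegree_sub _ _).trans (max_le ?_ ?_)
    · exact (totalDegree_mul _ _).trans (by rw [totalDegree_X]; omega)
    · exact (totalDegree_mul _ _).trans (by rw [totalDegree_C, totalDegree_X_pow])
  · have h2 : (2 : MvPolynomial σ R) * C (e / 2) = C e := by
      rw [← map_ofNat C 2, ← C_mul, mul_div_cancel₀ e two_ne_zero]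
    rw [map_sub, pderiv_mul, pderiv_C_mul, pderiv_X_self, he, pderiv_pow, pderiv_X_self]
    linear_combination (-X i) * h2

theorem AffineMap.hasFDerivAt_of_finiteDimensional {E F : Type*} [NormedAddCommGroup E]
    [NormedSpace ℝ E] [FiniteDimensional ℝ E] [NormedAddCommGroup F] [NormedSpace ℝ F]
    (ℓ : E →ᵃ[ℝ] F) (x : E) : HasFDerivAt ℓ (LinearMap.toContinuousLinearMap ℓ.linear) x :=
  (ContinuousAffineMap.mk ℓ ℓ.continuous_of_finiteDimensional).hasFDerivAt

theorem AffineMap.contDiff_of_finiteDimensional {E F : Type*} [NormedAddCommGroup E]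
    [NormedSpace ℝ E] [FiniteDimensional ℝ E] [NormedAddCommGroup F] [NormedSpace ℝ F]
    {n : WithTop ℕ∞} (ℓ : E →ᵃ[ℝ] F) : ContDiff ℝ n ℓ :=
  (ContinuousAffineMap.mk ℓ ℓ.continuous_of_finiteDimensional).contDiff

theorem AffineBasis.coord_eq_of_apply_eq_ite {ι V : Type*} [AddCommGroup V] [Module ℝ V]
    [DecidableEq ι] (b : AffineBasis ι ℝ V) {ℓ : ι → V →ᵃ[ℝ] ℝ}
    (hℓ : ∀ i j, ℓ i (b j) = if i = j then 1 else 0) (i : ι) : ℓ i = b.coord i := by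
  refine AffineMap.ext_on b.tot ?_
  rintro - ⟨j, rfl⟩
  simp [hℓ, AffineBasis.coord_apply]

section Simplex

variable {d : ℕ}

local notation "𝔼" => EuclideanSpace ℝ (Fin d)

theorem divg_eq_trace (w : 𝔼 → 𝔼) (x : 𝔼) :
    divg w x = LinearMap.trace ℝ 𝔼 (fderiv ℝ w x) := by
  rw [LinearMap.trace_eq_matrix_trace ℝ (EuclideanSpace.basisFun (Fin d) ℝ).toBasis, divg,
    Matrix.trace]
  simp [LinearMap.toMatrix_apply]

theorem HasFDerivAt.divg_eq {w : 𝔼 → 𝔼} {D : 𝔼 →L[ℝ] 𝔼} {x : 𝔼} (h : HasFDerivAt w D x) :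
    divg w x = LinearMap.trace ℝ 𝔼 D := by
  rw [divg_eq_trace, h.fderiv]

theorem divg_add {w₁ w₂ : 𝔼 → 𝔼} (h₁ : Differentiable ℝ w₁) (h₂ : Differentiable ℝ w₂) :
    divg (w₁ + w₂) = divg w₁ + divg w₂ := by
  ext x
  simp [((h₁ x).hasFDerivAt.add (h₂ x).hasFDerivAt).divg_eq, divg_eq_trace]

theorem divg_const_smul (a : ℝ) {w : 𝔼 → 𝔼} (h : Differentiable ℝ w) :
    divg (a • w) = a • divg w := by
  ext x
  simp [((h x).hasFDerivAt.const_smul a).divg_eq, divg_eq_trace]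

theorem divg_smul_sub_const {f : 𝔼 → ℝ} {f' : 𝔼 →L[ℝ] ℝ} {x : 𝔼} (hf : HasFDerivAt f f' x)
    (c : 𝔼) : divg (fun y => f y • (y - c)) x = f' (x - c) + d * f x := by
  have h : HasFDerivAt (fun y => f y • (y - c)) _ x := hf.smul ((hasFDerivAt_id x).sub_const c)
  rw [h.divg_eq]
  simp [add_comm, mul_comm]

def divgPreimage (S : Submodule ℝ (𝔼 → ℝ)) : Submodule ℝ (𝔼 → 𝔼) where
  carrier := {w | Differentiable ℝ w ∧ divg w ∈ S}
  add_mem' := fun ⟨h₁, s₁⟩ ⟨h₂, s₂⟩ => ⟨h₁.add h₂, divg_add h₁ h₂ ▸ S.add_mem s₁ s₂⟩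
  zero_mem' := ⟨differentiable_const 0, by convert S.zero_mem; ext; simp [divg]⟩
  smul_mem' := fun a _ ⟨h, s⟩ => ⟨h.const_smul a, divg_const_smul a h ▸ S.smul_mem a s⟩

section Polynomial

open MvPolynomial

theorem hasFDerivAt_pval (p : MvPolynomial (Fin d) ℝ) (x : 𝔼) :
    HasFDerivAt (pval p) (∑ j, pval (pderiv j p) x • (EuclideanSpace.proj j : 𝔼 →L[ℝ] ℝ)) x := by
  induction p using MvPolynomial.induction_on with
  | C a =>
    have hfun : pval (C a) = fun _ : 𝔼 => a := funext fun y => by simp [pval]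
    rw [hfun]
    simpa [pval] using hasFDerivAt_const a x
  | add p q hp hq =>
    have hfun : pval (p + q) = pval p + pval q := funext fun y => by simp [pval]
    rw [hfun]
    refine (hp.add hq).congr_fderiv ?_
    simp [pval, add_smul, Finset.sum_add_distrib]
  | mul_X p n hp =>
    have hfun : pval (p * X n) = fun y => pval p y * y n := funext fun y => by simp [pval]
    rw [hfun]
    refine (hp.fun_mul (EuclideanSpace.proj n : 𝔼 →L[ℝ] ℝ).hasFDerivAt).congr_fderiv ?_
    ext z
    simp [pval, pderiv_X, Pi.single_apply, add_mul, Finset.sum_add_distrib, apply_ite (eval _),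
      Finset.mul_sum, mul_assoc]

def polyField (P : Fin d → MvPolynomial (Fin d) ℝ) (y : 𝔼) : 𝔼 :=
  WithLp.toLp 2 fun k => pval (P k) y

theorem hasFDerivAt_polyField (P : Fin d → MvPolynomial (Fin d) ℝ) (x : 𝔼) :
    HasFDerivAt (polyField P) ((PiLp.continuousLinearEquiv 2 ℝ _).symm.toContinuousLinearMap ∘L
      ContinuousLinearMap.pi fun k =>
        ∑ j, pval (pderiv j (P k)) x • (EuclideanSpace.proj j : 𝔼 →L[ℝ] ℝ)) x :=
  (PiLp.hasFDerivAt_toLp 2 _).comp x (hasFDerivAt_pi.2 fun k => hasFDerivAt_pval (P k) x)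

theorem divg_polyField (P : Fin d → MvPolynomial (Fin d) ℝ) :
    divg (polyField P) = pval (∑ k, pderiv k (P k)) := by
  ext x
  simp [divg, (hasFDerivAt_polyField P x).fderiv, pval]

theorem differentiable_polyField (P : Fin d → MvPolynomial (Fin d) ℝ) :
    Differentiable ℝ (polyField P) :=
  fun x => (hasFDerivAt_polyField P x).differentiableAt

end Polynomial

theorem skwApply_gradient_eq (a t : 𝔼) (ψ : 𝔼 → ℝ) :
    (fun y => skwApply a t (gradient ψ y)) =
      fun y => (1 / 2 : ℝ) • (fderiv ℝ ψ y t • a - fderiv ℝ ψ y a • t) := by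
  ext1 y
  simp [skwApply, inner_gradient_right]

theorem hasFDerivAt_skwApply_gradient (a t : 𝔼) {ψ : 𝔼 → ℝ} (hψ : ContDiff ℝ 2 ψ) (x : 𝔼) :
    HasFDerivAt (fun y => skwApply a t (gradient ψ y))
      ((1 / 2 : ℝ) • ((ContinuousLinearMap.apply ℝ ℝ t ∘L fderiv ℝ (fderiv ℝ ψ) x).smulRight a -
        (ContinuousLinearMap.apply ℝ ℝ a ∘L fderiv ℝ (fderiv ℝ ψ) x).smulRight t)) x := by
  have hD : HasFDerivAt (fderiv ℝ ψ) (fderiv ℝ (fderiv ℝ ψ) x) x :=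
    ((hψ.fderiv_right (m := 1) (by norm_num)).differentiable one_ne_zero x).hasFDerivAt
  have happly (v : 𝔼) := (ContinuousLinearMap.apply ℝ ℝ v).hasFDerivAt.comp x hD
  rw [skwApply_gradient_eq]
  exact (((happly t).smul_const a).sub ((happly a).smul_const t)).const_smul (1 / 2 : ℝ)

theorem divg_skwApply_gradient (a t : 𝔼) {ψ : 𝔼 → ℝ} (hψ : ContDiff ℝ 2 ψ) :
    divg (fun y => skwApply a t (gradient ψ y)) = 0 := by
  ext x
  have hsymm := (hψ.contDiffAt (x := x)).isSymmSndFDerivAt (by simp) a t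
  simp [(hasFDerivAt_skwApply_gradient a t hψ x).divg_eq, hsymm]

theorem skwApply_gradient_mem_divgPreimage (S : Submodule ℝ (𝔼 → ℝ)) (a t : 𝔼) {ψ : 𝔼 → ℝ}
    (hψ : ContDiff ℝ 2 ψ) : (fun y => skwApply a t (gradient ψ y)) ∈ divgPreimage S :=
  ⟨fun x => (hasFDerivAt_skwApply_gradient a t hψ x).differentiableAt,
    divg_skwApply_gradient a t hψ ▸ S.zero_mem⟩

variable {v : Fin (d + 1) → EuclideanSpace ℝ (Fin d)}
  {L : Fin (d + 1) → (EuclideanSpace ℝ (Fin d) →ᵃ[ℝ] ℝ)}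

def simplexAffineBasis (hv : AffineIndependent ℝ v) : AffineBasis (Fin (d + 1)) ℝ 𝔼 :=
  ⟨v, hv, by rw [hv.affineSpan_eq_top_iff_card_eq_finrank_add_one]; simp⟩

theorem eq_coord_simplexAffineBasis (hv : AffineIndependent ℝ v)
    (hL : ∀ i j, L i (v j) = if i = j then 1 else 0) (i : Fin (d + 1)) :
    L i = (simplexAffineBasis hv).coord i :=
  (simplexAffineBasis hv).coord_eq_of_apply_eq_ite hL i

theorem sum_barycentric_eq_one (hv : AffineIndependent ℝ v)
    (hL : ∀ i j, L i (v j) = if i = j then 1 else 0) (x : 𝔼) : ∑ i, L i x = 1 := by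
  simp [eq_coord_simplexAffineBasis hv hL]

theorem sum_barycentric_smul_eq_self (hv : AffineIndependent ℝ v)
    (hL : ∀ i j, L i (v j) = if i = j then 1 else 0) (x : 𝔼) : ∑ i, L i x • v i = x := by
  conv_rhs => rw [← (simplexAffineBasis hv).linear_combination_coord_eq_self x]
  simp only [eq_coord_simplexAffineBasis hv hL]
  rfl

theorem linear_apply_sub_vertex (hL : ∀ i j, L i (v j) = if i = j then 1 else 0)
    (i j : Fin (d + 1)) (x : 𝔼) : (L i).linear (x - v j) = L i x - if i = j then 1 else 0 := by
  rw [← vsub_eq_sub, AffineMap.linearMap_vsub, hL, vsub_eq_sub]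

theorem wT_eq (hv : AffineIndependent ℝ v) (hL : ∀ i j, L i (v j) = if i = j then 1 else 0) :
    wT v L = fun y => (((d : ℝ) + 2)⁻¹ * (bNC L y - 2 * L 0 y + 2 / d)) • (y - v 0) := by
  ext1 y
  have hu : ∑ i ∈ univ.erase 0, L i y • (v i - v 0) = y - v 0 := by
    rw [Finset.sum_erase _ (by simp), Finset.sum_congr rfl fun i _ => smul_sub (L i y) (v i) (v 0),
      Finset.sum_sub_distrib, ← Finset.sum_smul, sum_barycentric_eq_one hv hL,
      sum_barycentric_smul_eq_self hv hL, one_smul]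
  rw [wT, hu, smul_smul, one_div]

theorem divg_wT (hd : d ≠ 0) (hv : AffineIndependent ℝ v)
    (hL : ∀ i j, L i (v j) = if i = j then 1 else 0) : divg (wT v L) = bNC L := by
  ext x
  have hℓ (i : Fin (d + 1)) := (L i).hasFDerivAt_of_finiteDimensional x
  have hbNC : HasFDerivAt (bNC L) _ x := (hasFDerivAt_const (2 : ℝ) x).fun_sub
    ((HasFDerivAt.fun_sum fun i _ => (hℓ i).pow 2).const_mul ((d : ℝ) + 1))
  have hφ := ((hbNC.fun_sub ((hℓ 0).const_mul 2)).add_const (2 / (d : ℝ))).const_mul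
    ((d : ℝ) + 2)⁻¹
  rw [wT_eq hv hL, divg_smul_sub_const hφ]
  simp only [Nat.add_one_sub_one, pow_one, nsmul_eq_mul, Nat.cast_ofNat, zero_sub,
    _root_.smul_apply, _root_.sub_apply, _root_.neg_apply, _root_.sum_apply,
    LinearMap.coe_toContinuousLinearMap',
    linear_apply_sub_vertex hL, smul_eq_mul, mul_sub, mul_assoc, ← sq, mul_ite, mul_one, mul_zero,
    sum_sub_distrib, ← mul_sum, sum_ite_eq', mem_univ, ↓reduceIte, neg_sub, bNC]
  field_simp
  ring

theorem differentiable_wT (hv : AffineIndependent ℝ v)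
    (hL : ∀ i j, L i (v j) = if i = j then 1 else 0) : Differentiable ℝ (wT v L) := by
  have hℓ (i : Fin (d + 1)) : Differentiable ℝ (L i) := fun x =>
    ((L i).hasFDerivAt_of_finiteDimensional x).differentiableAt
  rw [wT_eq hv hL]
  unfold bNC
  fun_prop

def affinePlusBubble (L : Fin (d + 1) → (𝔼 →ᵃ[ℝ] ℝ)) : Submodule ℝ (𝔼 → ℝ) where
  carrier := {f | ∃ p : MvPolynomial (Fin d) ℝ, p.totalDegree ≤ 1 ∧ ∃ c : ℝ,
    ∀ x, f x = pval p x + c * bNC L x}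
  add_mem' := by
    rintro f₁ f₂ ⟨p₁, hp₁, c₁, h₁⟩ ⟨p₂, hp₂, c₂, h₂⟩
    refine ⟨p₁ + p₂, (MvPolynomial.totalDegree_add _ _).trans (max_le hp₁ hp₂), c₁ + c₂,
      fun x => ?_⟩
    simp only [Pi.add_apply, h₁, h₂, pval, map_add]
    ring
  zero_mem' := ⟨0, by simp, 0, by simp [pval]⟩
  smul_mem' := by
    rintro a f ⟨p, hp, c, h⟩
    refine ⟨a • p, (MvPolynomial.totalDegree_smul_le a p).trans hp, a * c, fun x => ?_⟩
    simp only [Pi.smul_apply, h, pval, MvPolynomial.smul_eval, smul_eq_mul]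
    ring

theorem VT_le_divgPreimage (g : Fin (d + 1) → 𝔼) (hd : d ≠ 0) (hv : AffineIndependent ℝ v)
    (hL : ∀ i j, L i (v j) = if i = j then 1 else 0) :
    VT v L g ≤ divgPreimage (affinePlusBubble L) := by
  have hℓ (j : Fin (d + 1)) : ContDiff ℝ 2 (L j) := (L j).contDiff_of_finiteDimensional
  have hprod (s : Finset (Fin (d + 1))) : ContDiff ℝ 2 fun y => ∏ j ∈ s, L j y :=
    contDiff_prod fun j _ => hℓ j
  refine Submodule.span_le.2 ?_
  rintro w (((⟨P, hP, hw⟩ | rfl) | ⟨i, t, -, c, -, hw⟩) | ⟨i, t, -, hw⟩)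
  · obtain rfl : w = polyField P := funext fun x => WithLp.ofLp_injective 2 (funext (hw x))
    refine ⟨differentiable_polyField P, divg_polyField P ▸
      ⟨∑ k, MvPolynomial.pderiv k (P k), ?_, 0, fun x => by simp⟩⟩
    refine (MvPolynomial.totalDegree_finsetSum _ _).trans (Finset.sup_le fun k _ => ?_)
    have := MvPolynomial.totalDegree_pderiv_le k (P k)
    have := hP k
    omega
  · exact ⟨differentiable_wT hv hL,
      divg_wT hd hv hL ▸ ⟨0, by simp, 1, fun x => by simp [pval]⟩⟩
  · obtain rfl := funext hw
    exact skwApply_gradient_mem_divgPreimage _ _ _ (((hprod _).mul (hprod _)).mul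
      (ContDiff.sum fun j _ => contDiff_const.mul (hℓ j)))
  · obtain rfl := funext hw
    exact skwApply_gradient_mem_divgPreimage _ _ _ (((hprod _).pow 2).mul (hprod _))

theorem exists_mem_VT_divg_eq (g : Fin (d + 1) → 𝔼) (hd : d ≠ 0) (hv : AffineIndependent ℝ v)
    (hL : ∀ i j, L i (v j) = if i = j then 1 else 0) {p : MvPolynomial (Fin d) ℝ}
    (hp : p.totalDegree ≤ 1) (c : ℝ) :
    ∃ w ∈ VT v L g, divg w = pval p + c • bNC L := by
  let k₀ : Fin d := ⟨0, Nat.pos_of_ne_zero hd⟩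
  obtain ⟨Q, hQ, hQp⟩ := MvPolynomial.exists_totalDegree_le_two_pderiv_eq k₀ hp
  have hpoly : polyField (Pi.single k₀ Q) ∈ VT v L g := by
    refine Submodule.subset_span (Or.inl (Or.inl (Or.inl ⟨_, fun k => ?_, fun x k => rfl⟩)))
    rcases eq_or_ne k k₀ with rfl | hk <;> simp [*]
  have hwT : wT v L ∈ VT v L g := Submodule.subset_span (Or.inl (Or.inl (Or.inr rfl)))
  refine ⟨_, add_mem hpoly (Submodule.smul_mem _ c hwT), ?_⟩
  rw [divg_add (differentiable_polyField _) ((differentiable_wT hv hL).const_smul c),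
    divg_const_smul c (differentiable_wT hv hL), divg_wT hd hv hL, divg_polyField]
  simp [Pi.single_apply, apply_ite, hQp]

end Simplex

theorem stmt8_general (d : ℕ) (hd : 2 ≤ d)
    (v : Fin (d + 1) → EuclideanSpace ℝ (Fin d))
    (hv : AffineIndependent ℝ v)
    (L : Fin (d + 1) → (EuclideanSpace ℝ (Fin d) →ᵃ[ℝ] ℝ))
    (hL : ∀ i j, L i (v j) = if i = j then 1 else 0)
    (g : Fin (d + 1) → EuclideanSpace ℝ (Fin d)) :
    (∀ w ∈ VT v L g, ∃ p : MvPolynomial (Fin d) ℝ, p.totalDegree ≤ 1 ∧ ∃ c : ℝ,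
        ∀ x, divg w x = pval p x + c * bNC L x) ∧
    (∀ p : MvPolynomial (Fin d) ℝ, p.totalDegree ≤ 1 → ∀ c : ℝ,
        ∃ w ∈ VT v L g, ∀ x, divg w x = pval p x + c * bNC L x) := by
  have hd₀ : d ≠ 0 := by omega
  refine ⟨fun w hw => (VT_le_divgPreimage g hd₀ hv hL hw).2, fun p hp c => ?_⟩
  obtain ⟨w, hw, hdiv⟩ := exists_mem_VT_divg_eq g hd₀ hv hL hp c
  exact ⟨w, hw, fun x => congrFun hdiv x⟩

/-- `div` maps `V(T)` onto `P₁ ⊕ span{b_T^NC}`. -/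
theorem stmt8 (d : ℕ) (hd : 2 ≤ d)
    (v : Fin (d + 1) → EuclideanSpace ℝ (Fin d))
    (hv : AffineIndependent ℝ v)
    (L : Fin (d + 1) → (EuclideanSpace ℝ (Fin d) →ᵃ[ℝ] ℝ))
    (hL : ∀ i j, L i (v j) = if i = j then 1 else 0)
    (g : Fin (d + 1) → EuclideanSpace ℝ (Fin d))
    (hg : ∀ i x, ⟪g i, x⟫ = (L i).linear x) :
    (∀ w ∈ VT v L g, ∃ p : MvPolynomial (Fin d) ℝ, p.totalDegree ≤ 1 ∧ ∃ c : ℝ,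
        ∀ x, divg w x = pval p x + c * bNC L x) ∧
    (∀ p : MvPolynomial (Fin d) ℝ, p.totalDegree ≤ 1 → ∀ c : ℝ,
        ∃ w ∈ VT v L g, ∀ x, divg w x = pval p x + c * bNC L x) :=
  stmt8_general d hd v hv L hL g
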